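/- The second Hessian H₂(F) of the Fermat cubic F = x^3+y^3+z^3 is, up to a nonzero scalar, equal to (x^3-y^3)(y^3-z^3)(z^3-x^3). -/

import Mathlib

open MvPolynomial

noncomputable section

/-- The Fermat cubic `x³ + y³ + z³`. -/
def Fer : MvPolynomial (Fin 3) ℂ := X 0 ^ 3 + X 1 ^ 3 + X 2 ^ 3

/-- Second partial derivative `∂²Fer/∂xᵢ∂xⱼ`. -/
def D (i j : Fin 3) : MvPolynomial (Fin 3) ℂ := pderiv i (pderiv j Fer)

/-- The Hessian determinant `H = H(Fer)`. -/
def Hdet : MvPolynomial (Fin 3) ℂ :=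
  (Matrix.of fun i j : Fin 3 => pderiv i (pderiv j Fer)).det

/-- The 3×3 "Jacobian" determinant with rows the gradients of `f`, `g` and the row `r`. -/
def JacRow (f g : MvPolynomial (Fin 3) ℂ) (r : Fin 3 → MvPolynomial (Fin 3) ℂ) :
    MvPolynomial (Fin 3) ℂ :=
  (Matrix.of fun i j : Fin 3 => ![pderiv j f, pderiv j g, r j] i).det

/-- The six entries of the adjugate of the Hessian matrix of `Fer`
(in the order used by Cayley). -/
def AdjVec : Fin 6 → MvPolynomial (Fin 3) ℂ :=
  ![D 1 1 * D 2 2 - D 1 2 ^ 2,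
    D 0 0 * D 2 2 - D 0 2 ^ 2,
    D 0 0 * D 1 1 - D 0 1 ^ 2,
    D 0 1 * D 0 2 - D 0 0 * D 1 2,
    D 0 1 * D 1 2 - D 1 1 * D 0 2,
    D 0 2 * D 1 2 - D 2 2 * D 0 1]

/-- The six entries `(H_xx, H_yy, H_zz, 2H_yz, 2H_xz, 2H_xy)` of the Hessian of `H`. -/
def HVec : Fin 6 → MvPolynomial (Fin 3) ℂ :=
  ![pderiv 0 (pderiv 0 Hdet), pderiv 1 (pderiv 1 Hdet), pderiv 2 (pderiv 2 Hdet),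
    2 * pderiv 1 (pderiv 2 Hdet), 2 * pderiv 0 (pderiv 2 Hdet), 2 * pderiv 0 (pderiv 1 Hdet)]

/-- Cayley's bordered determinant `Ψ`. -/
def Psi : MvPolynomial (Fin 3) ℂ :=
  - Matrix.det !![0, pderiv 0 Hdet, pderiv 1 Hdet, pderiv 2 Hdet;
      pderiv 0 Hdet, D 0 0, D 0 1, D 0 2;
      pderiv 1 Hdet, D 0 1, D 1 1, D 1 2;
      pderiv 2 Hdet, D 0 2, D 1 2, D 2 2]

/-- Cayley's second Hessian `H₂(Fer)` (with the corrected coefficient 20 of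
Maugesten–Moe), for `d = deg Fer = 3`. -/
def SecondHessian : MvPolynomial (Fin 3) ℂ :=
  ((12 * 3 ^ 2 - 54 * 3 + 57 : ℤ) : MvPolynomial (Fin 3) ℂ) * Hdet *
      JacRow Fer Hdet (fun u => ∑ j, AdjVec j * pderiv u (HVec j))
    + (((3 - 2) * (12 * 3 - 27) : ℤ) : MvPolynomial (Fin 3) ℂ) * Hdet *
      JacRow Fer Hdet (fun u => ∑ j, pderiv u (AdjVec j) * HVec j)
    - ((20 * (3 - 2) ^ 2 : ℤ) : MvPolynomial (Fin 3) ℂ) *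
      JacRow Fer Hdet (fun u => pderiv u Psi)

/-!
The Hessian matrix of the Fermat cubic is `diag(6x, 6y, 6z)`, so `H = 6³xyz`. The adjugate of a
diagonal matrix is diagonal, while the Hessian of `xyz` has zero diagonal, so every term of both
`Ω`-contractions vanishes and `H₂ = -20 · Jac(F, H, Ψ)`. For a diagonal Hessian the bordered
determinant is `Ψ = ∑ H_i² ∏_{j ≠ i} D_jj = 6⁸(y³z³ + z³x³ + x³y³)`, and after scaling the columns
by `x, y, z` the Jacobian `Jac(F, H, Ψ)` becomes a Vandermonde determinant in `x³, y³, z³`.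
-/

@[simp] lemma MvPolynomial.pderiv_ofNat {R σ : Type*} [CommSemiring R] (i : σ) (n : ℕ)
    [n.AtLeastTwo] : pderiv i (no_index (OfNat.ofNat n) : MvPolynomial σ R) = 0 := by
  rw [← map_ofNat C n, pderiv_C]

lemma MvPolynomial.sum_mul_pderiv_eq_zero {R σ ι : Type*} [CommSemiring R] [Fintype ι]
    {a b : ι → MvPolynomial σ R} (h : ∀ j, a j = 0 ∨ b j = 0) (u : σ) :
    ∑ j, a j * pderiv u (b j) = 0 :=
  Finset.sum_eq_zero fun j _ => by rcases h j with h | h <;> simp [h]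

lemma MvPolynomial.sum_pderiv_mul_eq_zero {R σ ι : Type*} [CommSemiring R] [Fintype ι]
    {a b : ι → MvPolynomial σ R} (h : ∀ j, a j = 0 ∨ b j = 0) (u : σ) :
    ∑ j, pderiv u (a j) * b j = 0 := by
  simp_rw [mul_comm (pderiv u _)]
  exact sum_mul_pderiv_eq_zero (fun j => (h j).symm) u

lemma JacRow_zero (f g : MvPolynomial (Fin 3) ℂ) : JacRow f g 0 = 0 :=
  Matrix.det_eq_zero_of_row_eq_zero 2 fun _ => rfl

lemma D_self (i : Fin 3) : D i i = 6 * X i := by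
  fin_cases i <;> simp [D, Fer] <;> ring

lemma D_of_ne {i j : Fin 3} (h : i ≠ j) : D i j = 0 := by
  fin_cases i <;> fin_cases j <;> simp_all [D, Fer]

lemma Hdet_eq : Hdet = 6 ^ 3 * (X 0 * X 1 * X 2) := by
  have hdiag : Matrix.of D = Matrix.diagonal fun i => 6 * X i := by
    ext i j
    by_cases h : i = j
    · subst h; simp [D_self]
    · simp [D_of_ne h, h]
  change (Matrix.of D).det = _
  rw [hdiag, Matrix.det_diagonal, Fin.prod_univ_three]
  ring

lemma AdjVec_eq_zero_or_HVec_eq_zero (j : Fin 6) : AdjVec j = 0 ∨ HVec j = 0 := by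
  fin_cases j <;>
    first
    | (right; simp [HVec, Hdet_eq]; done)
    | (left; simp [AdjVec, D_of_ne])

lemma Psi_eq : Psi = 6 ^ 8 * (X 1 ^ 3 * X 2 ^ 3 + X 0 ^ 3 * X 2 ^ 3 + X 0 ^ 3 * X 1 ^ 3) := by
  rw [Psi, Matrix.det_succ_row_zero]
  simp [Hdet_eq, D_self, D_of_ne, Fin.sum_univ_succ, Matrix.det_fin_three, Fin.succAbove]
  ring

lemma JacRow_Psi_eq : JacRow Fer Hdet (fun u => pderiv u Psi) =
    9 * 6 ^ 11 * ((X 0 ^ 3 - X 1 ^ 3) * (X 1 ^ 3 - X 2 ^ 3) * (X 2 ^ 3 - X 0 ^ 3)) := by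
  rw [JacRow, Hdet_eq, Psi_eq, Matrix.det_fin_three]
  simp [Fer]
  ring

/-- The second Hessian of the Fermat cubic is, up to a nonzero scalar,
`(x³-y³)(y³-z³)(z³-x³)`. -/
theorem second_hessian_fermat :
    ∃ c : ℂ, c ≠ 0 ∧ SecondHessian =
      C c * (((X 0) ^ 3 - (X 1) ^ 3) * ((X 1) ^ 3 - (X 2) ^ 3) * ((X 2) ^ 3 - (X 0) ^ 3)) := by
  refine ⟨-180 * 6 ^ 11, by norm_num, ?_⟩
  have hΩH : (fun u => ∑ j, AdjVec j * pderiv u (HVec j)) = 0 :=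
    funext (sum_mul_pderiv_eq_zero AdjVec_eq_zero_or_HVec_eq_zero)
  have hΩΓ : (fun u => ∑ j, pderiv u (AdjVec j) * HVec j) = 0 :=
    funext (sum_pderiv_mul_eq_zero AdjVec_eq_zero_or_HVec_eq_zero)
  rw [SecondHessian, hΩH, hΩΓ, JacRow_zero, JacRow_Psi_eq]
  simp only [map_mul, map_neg, map_pow, map_ofNat]
  push_cast
  ring
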